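/- arXiv:2603.27827 — 4 statements merged into one kernel-verified Lean document; each statement's English description precedes it below -/
import Mathlib

section
/- If p_1, ..., p_m are distinct primes, a_1, ..., a_m are positive integers, and the sum of a_i/p_i equals 1, then for every index j, p_j divides a_j. -/
open Finset

theorem Finset.sum_div_mul_prod {ι K : Type*} [DecidableEq ι] [Field K] (s : Finset ι)
    (a p : ι → K) (hp : ∀ i ∈ s, p i ≠ 0) :
    (∑ i ∈ s, a i / p i) * ∏ i ∈ s, p i = ∑ i ∈ s, a i * ∏ k ∈ s.erase i, p k := by
  rw [sum_mul]
  refine sum_congr rfl fun i hi => ?_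
  rw [← mul_prod_erase s p hi]
  field_simp [hp i hi]

theorem prime_not_dvd_prod_erase {ι : Type*} [DecidableEq ι] {s : Finset ι} {p : ι → ℕ}
    (hp : ∀ i ∈ s, (p i).Prime) (hinj : Set.InjOn p s) {j : ι} (hj : j ∈ s) :
    ¬ p j ∣ ∏ k ∈ s.erase j, p k := by
  intro hdvd
  obtain ⟨k, hk, hjk⟩ := (hp j hj).prime.exists_mem_finset_dvd hdvd
  have hpk : p j = p k :=
    (Nat.prime_dvd_prime_iff_eq (hp j hj) (hp k (mem_of_mem_erase hk))).mp hjk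
  exact ne_of_mem_erase hk (hinj (mem_of_mem_erase hk) hj hpk.symm)

/-- Multiplying by `∏ p i`, every term but the `j`-th is divisible by `p j`, and the `j`-th is
`a j` times a product of primes different from `p j`. -/
theorem dvd_of_sum_div_distinct_primes_eq_int {ι : Type*} [DecidableEq ι] {s : Finset ι}
    {p : ι → ℕ} {a : ι → ℤ} (hp : ∀ i ∈ s, (p i).Prime) (hinj : Set.InjOn p s) {n : ℤ}
    (hsum : ∑ i ∈ s, (a i : ℚ) / p i = n) {j : ι} (hj : j ∈ s) : (p j : ℤ) ∣ a j := by
  have hcleared : ∑ i ∈ s, a i * ∏ k ∈ s.erase i, (p k : ℤ) = n * ∏ i ∈ s, (p i : ℤ) := by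
    have := sum_div_mul_prod s (fun i => (a i : ℚ)) (fun i => (p i : ℚ))
      fun i hi => Nat.cast_ne_zero.2 (hp i hi).ne_zero
    rw [hsum] at this
    exact_mod_cast this.symm
  have hrest : (p j : ℤ) ∣ ∑ i ∈ s.erase j, a i * ∏ k ∈ s.erase i, (p k : ℤ) :=
    dvd_sum fun i hi =>
      (dvd_prod_of_mem _ (mem_erase.2 ⟨(ne_of_mem_erase hi).symm, hj⟩)).mul_left _
  have hterm : (p j : ℤ) ∣ a j * ∏ k ∈ s.erase j, (p k : ℤ) := by
    rw [← add_sum_erase s _ hj] at hcleared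
    exact (dvd_add_left hrest).1 (hcleared ▸ (dvd_prod_of_mem _ hj).mul_left _)
  refine ((Nat.prime_iff_prime_int.mp (hp j hj)).dvd_or_dvd hterm).resolve_right ?_
  rw [← Nat.cast_prod, Int.natCast_dvd_natCast]
  exact prime_not_dvd_prod_erase hp hinj hj

theorem egyptian_prime_sum_dvd_general
    (m : ℕ) (p a : Fin m → ℕ)
    (hp : ∀ i, (p i).Prime) (hpinj : Function.Injective p)
    (hsum : (∑ i, (a i : ℚ) / (p i : ℚ)) = 1) :
    ∀ j, p j ∣ a j := by
  intro j
  have := dvd_of_sum_div_distinct_primes_eq_int (s := univ) (a := fun i => (a i : ℤ))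
    (fun i _ => hp i) hpinj.injOn (n := 1) (by simpa using hsum) (mem_univ j)
  exact_mod_cast this

theorem egyptian_prime_sum_dvd
    (m : ℕ) (p a : Fin m → ℕ)
    (hp : ∀ i, (p i).Prime) (hpinj : Function.Injective p)
    (ha : ∀ i, 0 < a i)
    (hsum : (∑ i, (a i : ℚ) / (p i : ℚ)) = 1) :
    ∀ j, p j ∣ a j :=
  egyptian_prime_sum_dvd_general m p a hp hpinj hsum
end

section
/- Suppose finitely many angles 2π/k_1, ..., 2π/k_s (with each k_i belonging to a fixed set S of integers ≥ 3) sum to 2π, where S consists of primes p_1 < ... < p_m together with doubled primes 2q_1, ..., 2q_k, all primes involved being distinct. Then either all k_i are equal to a single prime p (and s = p), or all k_i equal a single 2q (and s = 2q), or the multiset {k_1, ..., k_s} consists of exactly q_1 copies of 2q_1 and q_2 copies of 2q_2 for two of the doubled primes. -/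
/-!
Let `c_v` be the number of `k_i` equal to `v`, so that `∑ c_v / v = 1`. If `r` is the prime
underlying `v` (`v = r` or `v = 2r`), then `v` has larger `r`-adic valuation than every other
admissible value, so the ultrametric inequality applied to `c_v / v = 1 - ∑_{w ≠ v} c_w / w`
forces `r ∣ c_v`. As `0 < c_v ≤ v` for an occurring value, a prime `p` occurs exactly `p` times
and fills the whole sum, while a doubled prime `2q` occurs `q` or `2q` times, contributing `1/2`
or `1`: either one doubled prime fills the sum or two of them contribute `1/2` each.
-/

open Finset

section UnitFractions

variable {ι : Type*} [Fintype ι] {f : ι → ℕ}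

theorem sum_filter_eq_inv (v : ℕ) :
    ∑ i with f i = v, (f i : ℚ)⁻¹ = #{i | f i = v} / v := by
  rw [sum_congr rfl fun i hi => by rw [(mem_filter.1 hi).2], sum_const, nsmul_eq_mul,
    div_eq_mul_inv]

theorem card_filter_eq_le (hsum : ∑ i, (f i : ℚ)⁻¹ = 1) {v : ℕ} (hv : v ≠ 0) :
    #{i | f i = v} ≤ v := by
  have h : (#{i | f i = v} : ℚ) / v ≤ 1 := by
    rw [← sum_filter_eq_inv, ← hsum]
    exact sum_le_sum_of_subset_of_nonneg (filter_subset _ _) fun i _ _ => by positivity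
  exact_mod_cast (div_le_one (by positivity)).1 h

theorem forall_of_sum_filter_inv_eq_one (hf : ∀ i, f i ≠ 0) (hsum : ∑ i, (f i : ℚ)⁻¹ = 1)
    (P : ι → Prop) [DecidablePred P] (hP : ∑ i with P i, (f i : ℚ)⁻¹ = 1) : ∀ i, P i := by
  by_contra! ⟨i, hi⟩
  have hrest : ∑ i with ¬P i, (f i : ℚ)⁻¹ = 0 := by
    linarith [sum_filter_add_sum_filter_not univ P fun i => (f i : ℚ)⁻¹]
  have := (sum_eq_zero_iff_of_nonneg fun i _ => by positivity).1 hrest i (by simpa using hi)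
  simp [hf i] at this

theorem card_eq_of_forall_eq (hsum : ∑ i, (f i : ℚ)⁻¹ = 1) {v : ℕ} (h : ∀ i, f i = v) :
    Fintype.card ι = v := by
  simp only [h, sum_const, card_univ, nsmul_eq_mul] at hsum
  have hv : (v : ℚ) ≠ 0 := by rintro hv; simp [hv] at hsum
  exact_mod_cast (mul_inv_eq_one₀ hv).1 hsum

theorem card_filter_eq_eq_self_iff (hf : ∀ i, f i ≠ 0) (hsum : ∑ i, (f i : ℚ)⁻¹ = 1)
    {v : ℕ} (hv : v ≠ 0) : #{i | f i = v} = v ↔ ∀ i, f i = v := by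
  refine ⟨fun hc => forall_of_sum_filter_inv_eq_one hf hsum _ ?_, fun h => ?_⟩
  · rw [sum_filter_eq_inv, hc, div_self (by exact_mod_cast hv)]
  · rw [filter_true_of_mem fun i _ => h i, card_univ, card_eq_of_forall_eq hsum h]

theorem forall_eq_or_eq_of_two_mul_card_filter_eq (hf : ∀ i, f i ≠ 0)
    (hsum : ∑ i, (f i : ℚ)⁻¹ = 1) {a b : ℕ} (ha0 : a ≠ 0) (hb0 : b ≠ 0) (hab : a ≠ b)
    (ha : 2 * #{i | f i = a} = a) (hb : 2 * #{i | f i = b} = b) : ∀ i, f i = a ∨ f i = b := by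
  refine forall_of_sum_filter_inv_eq_one hf hsum _ ?_
  classical
  have half : ∀ c ≠ 0, 2 * #{i | f i = c} = c → ∑ i with f i = c, (f i : ℚ)⁻¹ = 1 / 2 := by
    intro c hc0 hc
    rw [sum_filter_eq_inv, div_eq_div_iff (by exact_mod_cast hc0) two_ne_zero]
    exact_mod_cast (by omega : #{i | f i = c} * 2 = 1 * c)
  rw [filter_or, sum_union (disjoint_filter.2 fun i _ h => by rwa [h]), half a ha0 ha,
    half b hb0 hb]
  norm_num

theorem padicNorm_inv_natCast {r n : ℕ} [Fact r.Prime] (hn : n ≠ 0) :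
    padicNorm r (n : ℚ)⁻¹ = (r : ℚ) ^ padicValNat r n := by
  rw [padicNorm.eq_zpow_of_nonzero (by positivity), padicValRat.inv, padicValRat.of_nat, neg_neg,
    zpow_natCast]

theorem prime_dvd_card_filter_eq (hsum : ∑ i, (f i : ℚ)⁻¹ = 1) {r v : ℕ} [Fact r.Prime]
    (hv : 0 < padicValNat r v)
    (hlt : ∀ i, f i ≠ v → padicValNat r (f i) < padicValNat r v) : r ∣ #{i | f i = v} := by
  have hr : (1 : ℚ) < r := by exact_mod_cast (Fact.out : r.Prime).one_lt
  have hv0 : v ≠ 0 := by rintro rfl; simp at hv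
  set t : ℚ := (r : ℚ) ^ padicValNat r v
  have ht : 1 < t := one_lt_pow₀ hr hv.ne'
  have hsplit : (#{i | f i = v} : ℚ) / v = 1 - ∑ i with f i ≠ v, (f i : ℚ)⁻¹ := by
    rw [← sum_filter_eq_inv, ← hsum, ← sum_filter_add_sum_filter_not univ (fun i => f i = v)]
    ring
  have hrest : padicNorm r (∑ i with f i ≠ v, (f i : ℚ)⁻¹) < t := by
    refine padicNorm.sum_lt' (fun i hi => ?_) (by positivity)
    by_cases hfi : f i = 0
    · rw [hfi, Nat.cast_zero, inv_zero, padicNorm.zero]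
      positivity
    · rw [padicNorm_inv_natCast hfi]
      exact pow_lt_pow_right₀ hr (hlt i (mem_filter.1 hi).2)
  have hnorm : padicNorm r (#{i | f i = v} : ℚ) * t < t := by
    calc padicNorm r (#{i | f i = v} : ℚ) * t
        = padicNorm r ((#{i | f i = v} : ℚ) / v) := by
          rw [div_eq_mul_inv, padicNorm.mul, padicNorm_inv_natCast hv0]
      _ ≤ max (padicNorm r 1) (padicNorm r _) := by rw [hsplit]; exact padicNorm.sub
      _ < t := by rw [padicNorm.one]; exact max_lt ht hrest
  exact (padicNorm.nat_lt_one_iff _).1 (by nlinarith)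

theorem forall_eq_of_dvd_card_filter_eq (hf : ∀ i, f i ≠ 0) (hsum : ∑ i, (f i : ℚ)⁻¹ = 1)
    {i₀ : ι} {v : ℕ} (hi₀ : f i₀ = v) (hv : v ∣ #{i | f i = v}) : ∀ i, f i = v := by
  have hv0 : v ≠ 0 := hi₀ ▸ hf i₀
  have hpos : 0 < #{i | f i = v} := card_pos.2 ⟨i₀, by simpa using hi₀⟩
  refine (card_filter_eq_eq_self_iff hf hsum hv0).1 ?_
  exact (card_filter_eq_le hsum hv0).antisymm (Nat.le_of_dvd hpos hv)

theorem card_filter_eq_eq_or_eq_two_mul (hsum : ∑ i, (f i : ℚ)⁻¹ = 1) {i₀ : ι} {r v : ℕ}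
    (hi₀ : f i₀ = v) (hv : v ≠ 0) (hr : r ∣ #{i | f i = v}) (hvr : v ≤ 2 * r) :
    #{i | f i = v} = r ∨ #{i | f i = v} = 2 * r := by
  have hpos : 0 < #{i | f i = v} := card_pos.2 ⟨i₀, by simpa using hi₀⟩
  have hle := card_filter_eq_le hsum hv
  obtain ⟨t, ht⟩ := hr
  rw [ht] at hpos hle ⊢
  have ht1 : 0 < t := Nat.pos_of_mul_pos_left hpos
  have ht2 : t ≤ 2 := by nlinarith
  interval_cases t <;> simp [mul_comm]

end UnitFractions

theorem padicValNat_le_padicValNat_two {r s w : ℕ} [Fact r.Prime] (hs : s.Prime) (hrs : r ≠ s)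
    (hw : w ∣ 2 * s) : padicValNat r w ≤ padicValNat r 2 := by
  have : Fact s.Prime := ⟨hs⟩
  have h2s : 2 * s ≠ 0 := mul_ne_zero two_ne_zero hs.ne_zero
  calc padicValNat r w ≤ padicValNat r (2 * s) :=
        (padicValNat_dvd_iff_le h2s).1 (pow_padicValNat_dvd.trans hw)
    _ = padicValNat r 2 := by
        rw [padicValNat.mul two_ne_zero hs.ne_zero, padicValNat_primes hrs, add_zero]

section PrimesAndDoubledPrimes

variable {m k : ℕ} {p : Fin m → ℕ} {q : Fin k → ℕ}

theorem padicValNat_lt_padicValNat_prime (hp : ∀ i, (p i).Prime) (hp2 : ∀ i, p i ≠ 2)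
    (hq : ∀ j, (q j).Prime) (hpinj : Function.Injective p) (hdisj : ∀ i j, p i ≠ q j) {w : ℕ}
    (hw : (∃ j, w = p j) ∨ ∃ j, w = 2 * q j) (i : Fin m) (hne : w ≠ p i) :
    padicValNat (p i) w < padicValNat (p i) (p i) := by
  have : Fact (p i).Prime := ⟨hp i⟩
  have h2 : padicValNat (p i) 2 = 0 := padicValNat_primes (q := 2) (hp2 i)
  suffices padicValNat (p i) w ≤ padicValNat (p i) 2 by rw [padicValNat_self]; omega
  rcases hw with ⟨j, rfl⟩ | ⟨j, rfl⟩
  · exact padicValNat_le_padicValNat_two (hp j) (fun h => hne (congrArg p (hpinj h)).symm)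
      (dvd_mul_left _ _)
  · exact padicValNat_le_padicValNat_two (hq j) (hdisj i j) dvd_rfl

theorem padicValNat_lt_padicValNat_two_mul_prime (hp : ∀ i, (p i).Prime)
    (hq : ∀ j, (q j).Prime) (hqinj : Function.Injective q) (hdisj : ∀ i j, p i ≠ q j) {w : ℕ}
    (hw : (∃ i, w = p i) ∨ ∃ i, w = 2 * q i) (j : Fin k) (hne : w ≠ 2 * q j) :
    padicValNat (q j) w < padicValNat (q j) (2 * q j) := by
  have : Fact (q j).Prime := ⟨hq j⟩
  suffices padicValNat (q j) w ≤ padicValNat (q j) 2 by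
    rw [padicValNat.mul two_ne_zero (hq j).ne_zero, padicValNat_self]; omega
  rcases hw with ⟨i, rfl⟩ | ⟨i, rfl⟩
  · exact padicValNat_le_padicValNat_two (hp i) (hdisj i j).symm (dvd_mul_left _ _)
  · exact padicValNat_le_padicValNat_two (hq i) (fun h => hne (by rw [hqinj h])) dvd_rfl

theorem doubled_primes_classification {ι : Type*} [Fintype ι] {f : ι → ℕ}
    (hq : ∀ j, (q j).Prime) (hqinj : Function.Injective q) (hf : ∀ i, ∃ j, f i = 2 * q j)
    (hsum : ∑ i, (f i : ℚ)⁻¹ = 1) (hdvd : ∀ j, q j ∣ #{i | f i = 2 * q j}) :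
    (∃ j, (∀ i, f i = 2 * q j) ∧ Fintype.card ι = 2 * q j) ∨
    (∃ j₁ j₂, j₁ ≠ j₂ ∧ (∀ i, f i = 2 * q j₁ ∨ f i = 2 * q j₂) ∧
      #{i | f i = 2 * q j₁} = q j₁ ∧ #{i | f i = 2 * q j₂} = q j₂) := by
  have hv0 : ∀ j, 2 * q j ≠ 0 := fun j => mul_ne_zero two_ne_zero (hq j).ne_zero
  have hf0 : ∀ i, f i ≠ 0 := fun i => by obtain ⟨j, h⟩ := hf i; rw [h]; exact hv0 j
  have hcard : ∀ i j, f i = 2 * q j →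
      #{i | f i = 2 * q j} = q j ∨ #{i | f i = 2 * q j} = 2 * q j :=
    fun i j h => card_filter_eq_eq_or_eq_two_mul hsum h (hv0 j) (hdvd j) le_rfl
  have hall : ∀ j, #{i | f i = 2 * q j} = 2 * q j ↔ ∀ i, f i = 2 * q j :=
    fun j => card_filter_eq_eq_self_iff hf0 hsum (hv0 j)
  obtain ⟨i₁⟩ : Nonempty ι := by
    by_contra h
    simp [not_nonempty_iff.1 h] at hsum
  obtain ⟨j₁, hj₁⟩ := hf i₁
  rcases hcard i₁ j₁ hj₁ with hc₁ | hc₁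
  swap
  · exact Or.inl ⟨j₁, (hall j₁).1 hc₁, card_eq_of_forall_eq hsum ((hall j₁).1 hc₁)⟩
  obtain ⟨i₂, hi₂⟩ : ∃ i, f i ≠ 2 * q j₁ := by
    by_contra! h
    have := (hall j₁).2 h
    have := (hq j₁).pos
    omega
  obtain ⟨j₂, hj₂⟩ := hf i₂
  have hj : j₁ ≠ j₂ := by rintro rfl; exact hi₂ hj₂
  have hc₂ : #{i | f i = 2 * q j₂} = q j₂ :=
    (hcard i₂ j₂ hj₂).resolve_right fun h => hj (hqinj (by have := (hall j₂).1 h i₁; omega))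
  refine Or.inr ⟨j₁, j₂, hj, ?_, hc₁, hc₂⟩
  exact forall_eq_or_eq_of_two_mul_card_filter_eq hf0 hsum (hv0 j₁) (hv0 j₂)
    (fun h => hj (hqinj (by omega))) (by omega) (by omega)

end PrimesAndDoubledPrimes

open Finset in
theorem vertex_configuration_classification_general
    (m k s : ℕ) (p : Fin m → ℕ) (q : Fin k → ℕ)
    (hp : ∀ i, (p i).Prime) (hq : ∀ j, (q j).Prime)
    (hp3 : ∀ i, 3 ≤ p i)
    (hpinj : Function.Injective p) (hqinj : Function.Injective q)
    (hdisj : ∀ i j, p i ≠ q j)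
    (ks : Fin s → ℕ)
    (hmem : ∀ i, (∃ j, ks i = p j) ∨ (∃ j, ks i = 2 * q j))
    (hsum : (∑ i, (2 * Real.pi) / (ks i : ℝ)) = 2 * Real.pi) :
    (∃ j, (∀ i, ks i = p j) ∧ s = p j) ∨
    (∃ j, (∀ i, ks i = 2 * q j) ∧ s = 2 * q j) ∨
    (∃ j₁ j₂, j₁ ≠ j₂ ∧
      (∀ i, ks i = 2 * q j₁ ∨ ks i = 2 * q j₂) ∧
      (univ.filter (fun i => ks i = 2 * q j₁)).card = q j₁ ∧
      (univ.filter (fun i => ks i = 2 * q j₂)).card = q j₂) := by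
  have hks0 : ∀ i, ks i ≠ 0 := fun i => by
    rcases hmem i with ⟨j, h⟩ | ⟨j, h⟩ <;> rw [h]
    exacts [(hp j).ne_zero, mul_ne_zero two_ne_zero (hq j).ne_zero]
  have hinv : ∑ i, (ks i : ℚ)⁻¹ = 1 := by
    have h : 2 * Real.pi * ∑ i, (ks i : ℝ)⁻¹ = 2 * Real.pi * 1 := by
      simpa only [mul_sum, mul_one, div_eq_mul_inv] using hsum
    rw [← Rat.cast_inj (α := ℝ)]
    push_cast
    exact mul_left_cancel₀ (by positivity) h
  by_cases hP : ∃ i j, ks i = p j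
  · obtain ⟨i, j, hij⟩ := hP
    have : Fact (p j).Prime := ⟨hp j⟩
    have hp2 : ∀ i, p i ≠ 2 := fun i => by have := hp3 i; omega
    have hdvd := prime_dvd_card_filter_eq hinv (one_le_padicValNat_of_dvd (hp j).ne_zero dvd_rfl)
      fun i hi => padicValNat_lt_padicValNat_prime hp hp2 hq hpinj hdisj (hmem i) j hi
    have hall := forall_eq_of_dvd_card_filter_eq hks0 hinv hij hdvd
    exact Or.inl ⟨j, hall, by simpa using card_eq_of_forall_eq hinv hall⟩
  · have hdoubled : ∀ i, ∃ j, ks i = 2 * q j := fun i =>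
      (hmem i).resolve_left fun ⟨j, h⟩ => hP ⟨i, j, h⟩
    have hdvd : ∀ j, q j ∣ #{i | ks i = 2 * q j} := fun j =>
      have : Fact (q j).Prime := ⟨hq j⟩
      prime_dvd_card_filter_eq hinv
        (one_le_padicValNat_of_dvd (mul_ne_zero two_ne_zero (hq j).ne_zero) (dvd_mul_left _ _))
        fun i hi => padicValNat_lt_padicValNat_two_mul_prime hp hq hqinj hdisj (hmem i) j hi
    simpa using Or.inr (doubled_primes_classification hq hqinj hdoubled hinv hdvd)

open Finset in
theorem vertex_configuration_classification
    (m k s : ℕ) (p : Fin m → ℕ) (q : Fin k → ℕ)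
    (hp : ∀ i, (p i).Prime) (hq : ∀ j, (q j).Prime)
    (hp3 : ∀ i, 3 ≤ p i) (hq3 : ∀ j, 3 ≤ 2 * q j)
    (hpinj : Function.Injective p) (hqinj : Function.Injective q)
    (hdisj : ∀ i j, p i ≠ q j)
    (ks : Fin s → ℕ)
    (hmem : ∀ i, (∃ j, ks i = p j) ∨ (∃ j, ks i = 2 * q j))
    (hsum : (∑ i, (2 * Real.pi) / (ks i : ℝ)) = 2 * Real.pi) :
    (∃ j, (∀ i, ks i = p j) ∧ s = p j) ∨
    (∃ j, (∀ i, ks i = 2 * q j) ∧ s = 2 * q j) ∨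
    (∃ j₁ j₂, j₁ ≠ j₂ ∧
      (∀ i, ks i = 2 * q j₁ ∨ ks i = 2 * q j₂) ∧
      (univ.filter (fun i => ks i = 2 * q j₁)).card = q j₁ ∧
      (univ.filter (fun i => ks i = 2 * q j₂)).card = q j₂) :=
  vertex_configuration_classification_general m k s p q hp hq hp3 hpinj hqinj hdisj ks hmem hsum
end

section
/- Suppose x_1, ..., x_s are elements of {1/p : p prime, p > 3} ∪ {1/(2q) : q prime} where all primes appearing are distinct, with repetitions allowed, and Σ x_i = 1. If some x_i = 1/p for a prime p (not of the form 1/(2q)), then all x_j equal 1/p and s = p. -/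
/-!
Let `P` be one of the primes `p j` and let `a` be the number of terms equal to `1 / P`. Every
other term is `1 / d` with `P ∤ d`, hence a `P`-adic integer, so `a / P = 1 - (other terms)` is a
`P`-adic integer too and `P ∣ a`. Since the terms are positive and `a ≥ 1`, this forces `a = P`
and leaves no room for other terms.
-/

open Finset

theorem Nat.Prime.not_dvd_two_mul_prime {P q : ℕ} (hP : P.Prime) (hq : q.Prime) (hP2 : P ≠ 2)
    (hPq : P ≠ q) : ¬P ∣ 2 * q := by
  rw [hP.dvd_mul, Nat.prime_dvd_prime_iff_eq hP Nat.prime_two, Nat.prime_dvd_prime_iff_eq hP hq]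
  exact fun h => h.elim hP2 hPq

namespace padicNorm

variable {P : ℕ} [Fact P.Prime]

theorem one_div_natCast_of_not_dvd {d : ℕ} (hd : ¬P ∣ d) : padicNorm P (1 / (d : ℚ)) = 1 := by
  rw [padicNorm.div, padicNorm.one, (nat_eq_one_iff d).mpr hd, div_one]

theorem dvd_of_div_le_one {a : ℕ} (ha : padicNorm P ((a : ℚ) / P) ≤ 1) : P ∣ a := by
  have hP : (0 : ℚ) < P := by exact_mod_cast (Fact.out : P.Prime).pos
  rw [padicNorm.div, padicNorm_p_of_prime, div_inv_eq_mul, ← le_div_iff₀ hP] at ha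
  refine (nat_lt_one_iff a).mp (ha.trans_lt ?_)
  exact (div_lt_one hP).mpr (by exact_mod_cast (Fact.out : P.Prime).one_lt)

end padicNorm

theorem eq_univ_and_card_eq_of_sum_eq_one {ι : Type*} [Fintype ι] {P : ℕ} [Fact P.Prime]
    (x : ι → ℚ) (S : Finset ι) (hS : S.Nonempty) (hxS : ∀ i ∈ S, x i = 1 / P)
    (hpos : ∀ i ∉ S, 0 < x i) (hnorm : ∀ i ∉ S, padicNorm P (x i) ≤ 1)
    (hsum : ∑ i, x i = 1) : S = univ ∧ #S = P := by
  classical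
  have hP : (0 : ℚ) < P := by exact_mod_cast (Fact.out : P.Prime).pos
  have hS_sum : ∑ i ∈ S, x i = #S / P := by
    rw [sum_congr rfl hxS, sum_const, nsmul_eq_mul, mul_one_div]
  have hsplit : (#S : ℚ) / P + ∑ i ∈ Sᶜ, x i = 1 := by
    rw [← hS_sum, sum_add_sum_compl, hsum]
  have hrest_nonneg : 0 ≤ ∑ i ∈ Sᶜ, x i :=
    sum_nonneg fun i hi => (hpos i (mem_compl.mp hi)).le
  have hdvd : P ∣ #S := by
    refine padicNorm.dvd_of_div_le_one ?_
    rw [eq_sub_of_add_eq hsplit]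
    refine padicNorm.sub.trans (max_le padicNorm.one.le ?_)
    exact padicNorm.sum_le' (fun i hi => hnorm i (mem_compl.mp hi)) zero_le_one
  have hcard_le : (#S : ℚ) ≤ P := by
    rw [← div_le_one hP]; linarith
  have hcard : #S = P :=
    le_antisymm (by exact_mod_cast hcard_le) (Nat.le_of_dvd hS.card_pos hdvd)
  refine ⟨?_, hcard⟩
  have hrest : ∑ i ∈ Sᶜ, x i = 0 := by
    rw [hcard, div_self hP.ne'] at hsplit; linarith
  rw [← compl_eq_empty_iff, ← not_nonempty_iff_eq_empty]
  rintro ⟨i, hi⟩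
  have hxi := (sum_eq_zero_iff_of_nonneg fun j hj => (hpos j (mem_compl.mp hj)).le).mp hrest i hi
  exact (hpos i (mem_compl.mp hi)).ne' hxi

theorem vertex_sum_forces_single_prime_general
    (mm kk s : ℕ) (p : Fin mm → ℕ) (q : Fin kk → ℕ)
    (hp : ∀ i, (p i).Prime) (hp3 : ∀ i, 3 < p i)
    (hq : ∀ j, (q j).Prime)
    (hdisj : ∀ i j, p i ≠ q j)
    (x : Fin s → ℚ)
    (hx : ∀ i, (∃ j, x i = 1 / (p j : ℚ)) ∨ (∃ j, x i = 1 / (2 * (q j : ℚ))))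
    (hsum : (∑ i, x i) = 1)
    (hsome : ∃ i j, x i = 1 / (p j : ℚ)) :
    ∃ j, (∀ i, x i = 1 / (p j : ℚ)) ∧ s = p j := by
  obtain ⟨i₀, j₀, hi₀⟩ := hsome
  have : Fact (p j₀).Prime := ⟨hp j₀⟩
  have hpos : ∀ i, 0 < x i := fun i => by
    rcases hx i with ⟨j, hj⟩ | ⟨j, hj⟩
    · rw [hj]; exact one_div_pos.mpr (by exact_mod_cast (hp j).pos)
    · rw [hj]; exact one_div_pos.mpr (by exact_mod_cast Nat.mul_pos two_pos (hq j).pos)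
  have hnorm : ∀ i, x i ≠ 1 / (p j₀ : ℚ) → padicNorm (p j₀) (x i) ≤ 1 := fun i hne => by
    rcases hx i with ⟨j, hj⟩ | ⟨j, hj⟩
    · rw [hj] at hne ⊢
      have hne' : p j₀ ≠ p j := fun h => hne (by rw [h])
      exact (padicNorm.one_div_natCast_of_not_dvd
        ((Nat.prime_dvd_prime_iff_eq (hp j₀) (hp j)).not.mpr hne')).le
    · have hP2 : p j₀ ≠ 2 := by have := hp3 j₀; omega
      have h := padicNorm.one_div_natCast_of_not_dvd
        ((hp j₀).not_dvd_two_mul_prime (hq j) hP2 (hdisj j₀ j))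
      push_cast at h
      rw [hj, h]
  set S := univ.filter fun i => x i = 1 / (p j₀ : ℚ)
  obtain ⟨huniv, hcard⟩ := eq_univ_and_card_eq_of_sum_eq_one x S ⟨i₀, by simp [S, hi₀]⟩
    (fun i hi => (mem_filter.mp hi).2) (fun i _ => hpos i)
    (fun i hi => hnorm i (by simpa [S] using hi)) hsum
  refine ⟨j₀, fun i => (mem_filter.mp (huniv ▸ mem_univ i : i ∈ S)).2, ?_⟩
  rwa [huniv, card_univ, Fintype.card_fin] at hcard

theorem vertex_sum_forces_single_prime
    (mm kk s : ℕ) (p : Fin mm → ℕ) (q : Fin kk → ℕ)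
    (hp : ∀ i, (p i).Prime) (hp3 : ∀ i, 3 < p i)
    (hq : ∀ j, (q j).Prime)
    (hpinj : Function.Injective p) (hqinj : Function.Injective q)
    (hdisj : ∀ i j, p i ≠ q j)
    (x : Fin s → ℚ)
    (hx : ∀ i, (∃ j, x i = 1 / (p j : ℚ)) ∨ (∃ j, x i = 1 / (2 * (q j : ℚ))))
    (hsum : (∑ i, x i) = 1)
    (hsome : ∃ i j, x i = 1 / (p j : ℚ)) :
    ∃ j, (∀ i, x i = 1 / (p j : ℚ)) ∧ s = p j :=
  vertex_sum_forces_single_prime_general mm kk s p q hp hp3 hq hdisj x hx hsum hsome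
end

section
/- For any prime p ≥ 5 and distinct primes q_1, q_2 different from p, there is no solution in positive integers a, b to a/p + b/(2q_1) = 1 and no solution in positive integers a, b, c to a/p + b/(2q_1) + c/(2q_2) = 1. -/
/-! Clearing denominators in `a/p + b/(2q₁) (+ c/(2q₂)) = 1` gives `d a + p b' = p d` with
`d = 2q₁` (resp. `2q₁q₂`) prime to `p`. Hence `p ∣ a`, so `a ≥ p` and `a/p ≥ 1`, leaving no room
for the positive remaining terms. -/

theorem Nat.Prime.mul_add_mul_ne {p d a b : ℕ} (hp : p.Prime) (hpd : ¬ p ∣ d)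
    (ha : 0 < a) (hb : 0 < b) : d * a + p * b ≠ p * d := by
  intro h
  have hpda : p ∣ d * a := (Nat.dvd_add_iff_left (dvd_mul_right p b)).mpr (h ▸ dvd_mul_right p d)
  have hpa : p ≤ a := Nat.le_of_dvd ha ((hp.dvd_mul.mp hpda).resolve_left hpd)
  nlinarith [hp.pos]

theorem Nat.Prime.div_add_div_ne_one {p d a b : ℕ} (hp : p.Prime) (hpd : ¬ p ∣ d)
    (ha : 0 < a) (hb : 0 < b) : (a : ℚ) / p + (b : ℚ) / d ≠ 1 := by
  have hd : (d : ℚ) ≠ 0 := by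
    rw [Nat.cast_ne_zero]
    rintro rfl
    exact hpd (dvd_zero p)
  have hp0 : (p : ℚ) ≠ 0 := by exact_mod_cast hp.ne_zero
  intro h
  apply hp.mul_add_mul_ne hpd ha hb
  field_simp at h
  exact_mod_cast (by linarith : (d * a + p * b : ℚ) = p * d)

theorem Nat.Prime.not_dvd_two_mul {p q : ℕ} (hp : p.Prime) (hp2 : p ≠ 2) (hq : q.Prime)
    (hqp : q ≠ p) : ¬ p ∣ 2 * q := by
  rw [hp.dvd_mul, Nat.prime_dvd_prime_iff_eq hp Nat.prime_two, Nat.prime_dvd_prime_iff_eq hp hq]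
  exact fun h => h.elim hp2 (fun h => hqp h.symm)

theorem no_mixed_odd_prime_solution_general
    (p q₁ q₂ : ℕ) (hp : p.Prime) (hp5 : 5 ≤ p)
    (hq₁ : q₁.Prime) (hq₂ : q₂.Prime)
    (hq₁p : q₁ ≠ p) (hq₂p : q₂ ≠ p) :
    (¬ ∃ a b : ℕ, 0 < a ∧ 0 < b ∧
        (a : ℚ) / p + (b : ℚ) / (2 * q₁) = 1) ∧
    (¬ ∃ a b c : ℕ, 0 < a ∧ 0 < b ∧ 0 < c ∧
        (a : ℚ) / p + (b : ℚ) / (2 * q₁) + (c : ℚ) / (2 * q₂) = 1) := by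
  have hp2 : p ≠ 2 := by omega
  have hpq₁ := hp.not_dvd_two_mul hp2 hq₁ hq₁p
  have hpq₂ := hp.not_dvd_two_mul hp2 hq₂ hq₂p
  refine ⟨fun ⟨a, b, ha, hb, h⟩ => hp.div_add_div_ne_one hpq₁ ha hb (by exact_mod_cast h), ?_⟩
  rintro ⟨a, b, c, ha, hb, -, h⟩
  have hpd : ¬ p ∣ 2 * q₁ * q₂ := by
    rw [hp.dvd_mul, not_or]
    exact ⟨hpq₁, fun h => hpq₂ (dvd_mul_of_dvd_right h 2)⟩
  refine hp.div_add_div_ne_one hpd ha (b := q₂ * b + q₁ * c)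
    (by have := hq₂.pos; positivity) ?_
  have hq₁0 : (q₁ : ℚ) ≠ 0 := by exact_mod_cast hq₁.ne_zero
  have hq₂0 : (q₂ : ℚ) ≠ 0 := by exact_mod_cast hq₂.ne_zero
  rw [← h]
  push_cast
  field_simp
  ring

theorem no_mixed_odd_prime_solution
    (p q₁ q₂ : ℕ) (hp : p.Prime) (hp5 : 5 ≤ p)
    (hq₁ : q₁.Prime) (hq₂ : q₂.Prime)
    (hq₁p : q₁ ≠ p) (hq₂p : q₂ ≠ p) (hq₁₂ : q₁ ≠ q₂) :
    (¬ ∃ a b : ℕ, 0 < a ∧ 0 < b ∧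
        (a : ℚ) / p + (b : ℚ) / (2 * q₁) = 1) ∧
    (¬ ∃ a b c : ℕ, 0 < a ∧ 0 < b ∧ 0 < c ∧
        (a : ℚ) / p + (b : ℚ) / (2 * q₁) + (c : ℚ) / (2 * q₂) = 1) :=
  no_mixed_odd_prime_solution_general p q₁ q₂ hp hp5 hq₁ hq₂ hq₁p hq₂p
end
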